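/- arXiv:2401.05794 — 2 statements merged into one kernel-verified Lean document; each statement's English description precedes it below -/
import Mathlib

section
/- Let k = 2^m with m a positive integer (so k ≥ 2 is a power of 2), let F be a finite field with exactly k elements, and let S be a subset of F^2. Then there exists u in F^2 such that for every subset Z of F with exactly k/2 elements, the number of elements s of S with s·u ∈ Z is at most (|S| + k^{3/2})/2, where the inequality is an inequality of real numbers (k^{3/2} = k·√k). -/
/-!
Write `N_u(z)` for the number of `s ∈ S` with `s ⬝ᵥ u = z`. Then `∑_z N_u(z)²` counts the pairs
`(s, t) ∈ S²` with `s ⬝ᵥ u = t ⬝ᵥ u`, and a pair `s ≠ t` satisfies this for exactly `k` of the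
`k²` directions `u` (the kernel of `(s - t) ⬝ᵥ ·`). Averaging over `u` yields a direction with
`∑_z (N_u(z) - |S|/k)² ≤ |S|`. By Cauchy–Schwarz the deviations `N_u(z) - |S|/k` then have
total absolute value at most `√(k |S|) ≤ k √k`; since they sum to zero, any `k/2` values of `z`
carry at most `|S|/2 + k √k / 2` points.
-/

open Finset

theorem AddMonoidHom.card_fiber_mul_card_of_surjective {G M Φ : Type*} [AddGroup G] [Fintype G]
    [AddMonoid M] [Fintype M] [DecidableEq M] [FunLike Φ G M] [AddMonoidHomClass Φ G M]
    (f : Φ) (hf : Function.Surjective f) (x : M) :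
    #{g | f g = x} * Fintype.card M = Fintype.card G := by
  rw [← card_univ (α := G), card_eq_sum_card_fiberwise (s := univ) (f := f) (t := univ)
      fun _ _ ↦ mem_univ _,
    sum_congr rfl fun y _ ↦ AddMonoidHom.card_fiber_eq_of_mem_range f (hf y) (hf x),
    sum_const, card_univ, smul_eq_mul, mul_comm]

theorem sum_sq_card_filter_eq_card_filter_product {α β : Type*} [Fintype β] [DecidableEq β]
    (S : Finset α) (f : α → β) :
    ∑ z, #{s ∈ S | f s = z} ^ 2 = #{p ∈ S ×ˢ S | f p.1 = f p.2} := by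
  rw [card_eq_sum_card_fiberwise (f := fun p ↦ f p.1) (t := univ) fun _ _ ↦ mem_univ _]
  refine sum_congr rfl fun z _ ↦ ?_
  rw [sq, ← card_product, ← filter_product, filter_filter]
  congr 1
  refine filter_congr fun p _ ↦ ?_
  constructor
  · rintro ⟨h1, h2⟩; exact ⟨h1.trans h2.symm, h1⟩
  · rintro ⟨h, h1⟩; exact ⟨h1, h ▸ h1⟩

theorem sum_le_half_sum_abs_of_sum_eq_zero {α : Type*} [Fintype α] (D : α → ℝ)
    (hD : ∑ a, D a = 0) (Z : Finset α) : ∑ a ∈ Z, D a ≤ (∑ a, |D a|) / 2 :=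
  calc ∑ a ∈ Z, D a ≤ ∑ a ∈ Z, (|D a| + D a) / 2 :=
        sum_le_sum fun a _ ↦ by linarith [le_abs_self (D a)]
    _ ≤ ∑ a, (|D a| + D a) / 2 :=
        sum_le_sum_of_subset_of_nonneg (subset_univ Z) fun a _ _ ↦ by linarith [neg_abs_le (D a)]
    _ = (∑ a, |D a|) / 2 := by rw [← sum_div, sum_add_distrib, hD, add_zero]

theorem sum_abs_le_sqrt_card_mul_sum_sq {α : Type*} [Fintype α] (D : α → ℝ) :
    ∑ a, |D a| ≤ √(Fintype.card α * ∑ a, D a ^ 2) := by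
  apply Real.le_sqrt_of_sq_le
  simpa only [sq_abs, card_univ] using
    sq_sum_le_card_mul_sum_sq (s := univ) (f := fun a ↦ |D a|)

theorem sum_le_half_add_sqrt_card_mul_sum_sq_sub {α : Type*} [Fintype α] [Nonempty α]
    (N : α → ℝ) {n : ℝ} (hN : ∑ a, N a = n) (hn : 0 ≤ n) {Z : Finset α}
    (hZ : 2 * #Z ≤ Fintype.card α) :
    ∑ a ∈ Z, N a ≤ (n + √(Fintype.card α * ∑ a, (N a - n / Fintype.card α) ^ 2)) / 2 := by
  have hZq : 2 * (#Z : ℝ) ≤ Fintype.card α := by exact_mod_cast hZ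
  set q : ℝ := (Fintype.card α : ℝ)
  have hq : 0 < q := by positivity
  have hD : ∑ a, (N a - n / q) = 0 := by
    rw [sum_sub_distrib, hN, sum_const, card_univ, nsmul_eq_mul, mul_div_cancel₀ _ hq.ne']
    ring
  have hmean : #Z * (n / q) ≤ n / 2 := by
    rw [mul_div_assoc', div_le_div_iff₀ hq two_pos]; nlinarith
  calc ∑ a ∈ Z, N a = #Z * (n / q) + ∑ a ∈ Z, (N a - n / q) := by
        rw [sum_sub_distrib, sum_const, nsmul_eq_mul]; ring
    _ ≤ n / 2 + (∑ a, |N a - n / q|) / 2 :=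
        add_le_add hmean (sum_le_half_sum_abs_of_sum_eq_zero _ hD Z)
    _ ≤ (n + √(q * ∑ a, (N a - n / q) ^ 2)) / 2 := by
        linarith [sum_abs_le_sqrt_card_mul_sum_sq fun a ↦ N a - n / q]

theorem dotProduct_surjective {ι F : Type*} [Fintype ι] [Field F] {w : ι → F} (hw : w ≠ 0) :
    Function.Surjective (w ⬝ᵥ ·) := by
  classical
  obtain ⟨i, hi⟩ := Function.ne_iff.1 hw
  exact fun c ↦ ⟨Pi.single i (c / w i), by
    simp only [dotProduct_single]; exact mul_div_cancel₀ c hi⟩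

section DotProduct

variable {ι F : Type*} [Fintype ι] [DecidableEq ι] [Field F] [Fintype F] [DecidableEq F]

theorem card_filter_dotProduct_eq_mul_card (s t : ι → F) :
    #{u | s ⬝ᵥ u = t ⬝ᵥ u} * Fintype.card F =
      Fintype.card F ^ Fintype.card ι * if s = t then Fintype.card F else 1 := by
  by_cases hst : s = t
  · simp [hst]
  · rw [if_neg hst, mul_one, ← Fintype.card_fun]
    convert AddMonoidHom.card_fiber_mul_card_of_surjective (dotProductBilin F F (s - t))
      (dotProduct_surjective (sub_ne_zero.2 hst)) 0 using 3
    simp [sub_eq_zero]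

theorem card_mul_sum_card_collisions_le (S : Finset (ι → F)) :
    Fintype.card F * ∑ u, #{p ∈ S ×ˢ S | p.1 ⬝ᵥ u = p.2 ⬝ᵥ u} ≤
      Fintype.card F ^ Fintype.card ι * (#S * Fintype.card F + #S ^ 2) := by
  set q := Fintype.card F
  have hpair (p : (ι → F) × (ι → F)) :
      q * #{u | p.1 ⬝ᵥ u = p.2 ⬝ᵥ u} ≤
        q ^ Fintype.card ι * ((if p.1 = p.2 then q else 0) + 1) := by
    rw [mul_comm, card_filter_dotProduct_eq_mul_card]
    gcongr
    split_ifs <;> omega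
  have hdiag : ∑ p ∈ S ×ˢ S, (if p.1 = p.2 then q else 0) = #S * q := by
    rw [sum_product, sum_congr rfl fun s hs ↦ sum_ite_eq S s fun _ ↦ q]
    simp
  calc q * ∑ u, #{p ∈ S ×ˢ S | p.1 ⬝ᵥ u = p.2 ⬝ᵥ u}
      = ∑ p ∈ S ×ˢ S, q * #{u | p.1 ⬝ᵥ u = p.2 ⬝ᵥ u} := by
        rw [← mul_sum]
        exact congrArg (q * ·) (sum_card_bipartiteAbove_eq_sum_card_bipartiteBelow
          fun u (p : (ι → F) × (ι → F)) ↦ p.1 ⬝ᵥ u = p.2 ⬝ᵥ u)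
    _ ≤ ∑ p ∈ S ×ˢ S, q ^ Fintype.card ι * ((if p.1 = p.2 then q else 0) + 1) :=
        sum_le_sum fun p _ ↦ hpair p
    _ = q ^ Fintype.card ι * (#S * q + #S ^ 2) := by
        rw [← mul_sum, sum_add_distrib, hdiag, sum_const, card_product, smul_eq_mul, mul_one, sq]

theorem exists_card_mul_card_collisions_le (S : Finset (ι → F)) :
    ∃ u, Fintype.card F * #{p ∈ S ×ˢ S | p.1 ⬝ᵥ u = p.2 ⬝ᵥ u} ≤
      #S * Fintype.card F + #S ^ 2 := by
  obtain ⟨u, -, hu⟩ := exists_le_of_sum_le (s := univ)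
    (f := fun u ↦ Fintype.card F * #{p ∈ S ×ˢ S | p.1 ⬝ᵥ u = p.2 ⬝ᵥ u})
    (g := fun _ ↦ #S * Fintype.card F + #S ^ 2) univ_nonempty (by
      rw [sum_const, card_univ, Fintype.card_fun, smul_eq_mul, ← mul_sum]
      exact card_mul_sum_card_collisions_le S)
  exact ⟨u, hu⟩

theorem exists_sum_sq_card_filter_dotProduct_sub_le (S : Finset (ι → F)) :
    ∃ u, ∑ z, ((#{s ∈ S | s ⬝ᵥ u = z} : ℝ) - #S / Fintype.card F) ^ 2 ≤ #S := by
  obtain ⟨u, hu⟩ := exists_card_mul_card_collisions_le S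
  refine ⟨u, ?_⟩
  rw [← sum_sq_card_filter_eq_card_filter_product S (· ⬝ᵥ u)] at hu
  have hmass : ∑ z, (#{s ∈ S | s ⬝ᵥ u = z} : ℝ) = #S := by
    exact_mod_cast (card_eq_sum_card_fiberwise fun _ _ ↦ mem_univ _).symm
  have henergy : (Fintype.card F : ℝ) * ∑ z, (#{s ∈ S | s ⬝ᵥ u = z} : ℝ) ^ 2 ≤
      #S * Fintype.card F + #S ^ 2 := by
    exact_mod_cast hu
  set N : F → ℝ := fun z ↦ #{s ∈ S | s ⬝ᵥ u = z}
  set n : ℝ := ((#S : ℕ) : ℝ)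
  set q : ℝ := ((Fintype.card F : ℕ) : ℝ)
  have hq : 0 < q := by positivity
  calc ∑ z, (N z - n / q) ^ 2 = ∑ z, N z ^ 2 - n ^ 2 / q := by
        simp only [sub_sq, sum_add_distrib, sum_sub_distrib, ← sum_mul, ← mul_sum, hmass,
          sum_const, card_univ, nsmul_eq_mul]
        field_simp
        ring
    _ ≤ n := by
        rw [sub_le_iff_le_add, ← mul_le_mul_iff_of_pos_left hq]
        field_simp
        linarith

end DotProduct

theorem exists_good_direction_general (k : ℕ)
    (F : Type*) [Field F] [Fintype F] [DecidableEq F] (hcard : Fintype.card F = k)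
    (S : Finset (Fin 2 → F)) :
    ∃ u : Fin 2 → F, ∀ Z : Finset F, Z.card = k / 2 →
      ((S.filter (fun s => (∑ i, s i * u i) ∈ Z)).card : ℝ)
        ≤ ((S.card : ℝ) + k * Real.sqrt k) / 2 := by
  subst hcard
  obtain ⟨u, hu⟩ := exists_sum_sq_card_filter_dotProduct_sub_le S
  refine ⟨u, fun Z hZ ↦ ?_⟩
  have hZF : 2 * #Z ≤ Fintype.card F := by omega
  set q := Fintype.card F
  have hmass : ∑ z, (#{s ∈ S | s ⬝ᵥ u = z} : ℝ) = #S := by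
    exact_mod_cast (card_eq_sum_card_fiberwise fun _ _ ↦ mem_univ _).symm
  have hS : (#S : ℝ) ≤ q ^ 2 := by
    exact_mod_cast (card_le_univ S).trans_eq (by simp [q, sq])
  calc (#{s ∈ S | s ⬝ᵥ u ∈ Z} : ℝ) = ∑ z ∈ Z, (#{s ∈ S | s ⬝ᵥ u = z} : ℝ) := by
        exact_mod_cast (sum_card_fiberwise_eq_card_filter S Z _).symm
    _ ≤ (#S + √(q * ∑ z, ((#{s ∈ S | s ⬝ᵥ u = z} : ℝ) - #S / q) ^ 2)) / 2 :=
        sum_le_half_add_sqrt_card_mul_sum_sq_sub _ hmass (by positivity) hZF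
    _ ≤ (#S + √(q * q ^ 2)) / 2 := by
        gcongr
        exact hu.trans hS
    _ = (#S + q * √q) / 2 := by
        rw [Real.sqrt_mul' _ (by positivity), Real.sqrt_sq (by positivity), mul_comm]

theorem exists_good_direction (m : ℕ) (hm : 0 < m) (k : ℕ) (hk : k = 2 ^ m)
    (F : Type*) [Field F] [Fintype F] [DecidableEq F] (hcard : Fintype.card F = k)
    (S : Finset (Fin 2 → F)) :
    ∃ u : Fin 2 → F, ∀ Z : Finset F, Z.card = k / 2 →
      ((S.filter (fun s => (∑ i, s i * u i) ∈ Z)).card : ℝ)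
        ≤ ((S.card : ℝ) + k * Real.sqrt k) / 2 :=
  exists_good_direction_general k F hcard S
end

section
/- The function sending a natural number k to [ log(k·log k) / ( -log( (k-1)/k + 1/(k·log k) ) ) ] / (k·log k) tends to 1 as k tends to infinity. (This is the statement that the mistake bound log(1/α)/(-log((k-1)/k + α)) with α = 1/(k·log k) equals k·log(k)·(1+o(1)).) -/
open Filter Real Topology

/-!
Put `y = (k - 1) / k + 1 / (k log k)`, so that `y - 1 = -(log k - 1) / (k log k)`. The ratio then
factors as `(log k + log log k) / (log k - 1) * ((y - 1) / log y)`: the first factor tends to `1`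
because `log log k = o(log k)`, the second because `y → 1` and `log' 1 = 1`.
-/

theorem Real.tendsto_log_div_sub_one_nhdsNE_one :
    Tendsto (fun y : ℝ => log y / (y - 1)) (𝓝[≠] 1) (𝓝 1) := by
  have h := hasDerivAt_iff_tendsto_slope.mp (hasDerivAt_log one_ne_zero)
  rw [inv_one] at h
  refine h.congr fun y => ?_
  simp [slope_def_field]

theorem Real.tendsto_add_log_div_sub_one_atTop :
    Tendsto (fun y : ℝ => (y + log y) / (y - 1)) atTop (𝓝 1) := by
  have hlog : Tendsto (fun y : ℝ => log y / y) atTop (𝓝 0) := by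
    simpa using isLittleO_log_id_atTop.tendsto_div_nhds_zero
  have h := ((tendsto_const_nhds (x := (1 : ℝ))).add hlog).div
    ((tendsto_const_nhds (x := (1 : ℝ))).sub tendsto_inv_atTop_zero) (by norm_num)
  rw [add_zero, sub_zero, div_one] at h
  refine h.congr' ?_
  filter_upwards [eventually_gt_atTop 1] with y hy
  have : y - 1 ≠ 0 := by linarith
  simp only [Pi.div_apply]
  field_simp

theorem tendsto_sub_one_div_self_add_one_div_mul_log_atTop :
    Tendsto (fun x : ℝ => (x - 1) / x + 1 / (x * log x)) atTop (𝓝[≠] 1) := by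
  refine tendsto_nhdsWithin_iff.mpr ⟨?_, ?_⟩
  · have h := (tendsto_const_nhds (x := (1 : ℝ)).sub tendsto_inv_atTop_zero).add
      (tendsto_id.atTop_mul_atTop₀ tendsto_log_atTop).inv_tendsto_atTop
    rw [sub_zero, add_zero] at h
    refine h.congr' ?_
    filter_upwards [eventually_gt_atTop 0] with x hx
    simp only [id, Pi.inv_apply, one_div, sub_div, div_self hx.ne']
  · filter_upwards [eventually_gt_atTop 0, tendsto_log_atTop.eventually_gt_atTop 1] with x hx hL
    have : 1 / (x * log x) < 1 / x := one_div_lt_one_div_of_lt hx (lt_mul_of_one_lt_right hx hL)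
    rw [Set.mem_compl_singleton_iff, sub_div, div_self hx.ne']
    linarith

theorem tendsto_log_mul_log_div_neg_log_div_mul_log_atTop :
    Tendsto (fun x : ℝ =>
      log (x * log x) / -log ((x - 1) / x + 1 / (x * log x)) / (x * log x)) atTop (𝓝 1) := by
  have hy := tendsto_log_div_sub_one_nhdsNE_one.comp
    tendsto_sub_one_div_self_add_one_div_mul_log_atTop
  have h := (tendsto_add_log_div_sub_one_atTop.comp tendsto_log_atTop).mul (hy.inv₀ one_ne_zero)
  rw [inv_one, mul_one] at h
  refine h.congr' ?_
  filter_upwards [eventually_gt_atTop 0, tendsto_log_atTop.eventually_gt_atTop 1] with x hx hL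
  have hL0 : log x ≠ 0 := by positivity
  simp only [Function.comp, log_mul hx.ne' hL0]
  field_simp
  ring

open Filter Real in
theorem agnostic_bound_asymptotic :
    Tendsto (fun k : ℕ =>
        (Real.log ((k : ℝ) * Real.log k) /
          (-Real.log (((k : ℝ) - 1) / (k : ℝ) + 1 / ((k : ℝ) * Real.log k)))) /
        ((k : ℝ) * Real.log k))
      atTop (nhds 1) :=
  tendsto_log_mul_log_div_neg_log_div_mul_log_atTop.comp tendsto_natCast_atTop_atTop
end
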